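/- Let q ≥ 1 be an integer, N = 2^q, and define recursively B^{(1)} = B (the (N−1)×(N−1) constant-kernel stiffness matrix) and, for 2 ≤ k ≤ q, B^{(k)} = W_k B^{(k−1)} W_kᵀ, where W_k is the (N/2^{k−1}−1)×(N/2^{k−2}−1) matrix with (W_k)_{i,2i−1} = 1, (W_k)_{i,2i} = 2, (W_k)_{i,2i+1} = 1 and all other entries 0. Then for every 1 ≤ k ≤ q, B^{(k)} is the symmetric Toeplitz matrix of size N/2^{k−1}−1 with entries B^{(k)}_{i,j} = (2^{3k−2}/3)N − 2^{4k−4} if i = j, B^{(k)}_{i,j} = (2^{3k−4}/3)N − 2^{4k−4} if |i−j| = 1, and B^{(k)}_{i,j} = −2^{4k−4} if |i−j| ≥ 2. -/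
import Mathlib


open Matrix

/-- The `(N−1)×(N−1)` constant-kernel stiffness matrix: `2N/3 − 1` on the diagonal,
`N/6 − 1` on the first sub/super-diagonals, and `−1` elsewhere. -/
noncomputable def constB (N : ℕ) : Matrix (Fin (N - 1)) (Fin (N - 1)) ℝ :=
  Matrix.of fun i j =>
    if (i : ℕ) = (j : ℕ) then 2 * (N : ℝ) / 3 - 1
    else if (i : ℕ) + 1 = (j : ℕ) ∨ (j : ℕ) + 1 = (i : ℕ) then (N : ℝ) / 6 - 1
    else -1

/-- Four times the full-weighting restriction: rows have the stencil `[1, 2, 1]`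
(row `i` acts on columns `2i−1, 2i, 2i+1` in 1-based numbering). -/
def Wgen (m n : ℕ) : Matrix (Fin m) (Fin n) ℝ :=
  Matrix.of fun i j =>
    if (j : ℕ) = 2 * (i : ℕ) then 1
    else if (j : ℕ) = 2 * (i : ℕ) + 1 then 2
    else if (j : ℕ) = 2 * (i : ℕ) + 2 then 1
    else 0

/-- The Galerkin coarse-grid hierarchy of the constant-kernel stiffness matrix, indexed
so that `Bseq q (k-1)` is the level-`k` matrix `B^{(k)}` of size `N/2^{k−1} − 1`,
`N = 2^q`: `Bseq q 0 = constB (2^q)` and `Bseq q (j+1) = W ⬝ Bseq q j ⬝ Wᵀ`. -/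
noncomputable def Bseq (q : ℕ) : (j : ℕ) → Matrix (Fin (2 ^ (q - j) - 1)) (Fin (2 ^ (q - j) - 1)) ℝ
  | 0 => constB (2 ^ q)
  | j + 1 =>
      Wgen (2 ^ (q - (j + 1)) - 1) (2 ^ (q - j) - 1) * Bseq q j *
        (Wgen (2 ^ (q - (j + 1)) - 1) (2 ^ (q - j) - 1))ᵀ

noncomputable def Etp (a b c : ℝ) (x y : ℕ) : ℝ :=
  if x = y then a else if x + 1 = y ∨ y + 1 = x then b else c

lemma Etp_eq {x y : ℕ} (a b c : ℝ) (h : x = y) : Etp a b c x y = a := if_pos h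

lemma Etp_adj {x y : ℕ} (a b c : ℝ) (h1 : ¬ x = y) (h2 : x + 1 = y ∨ y + 1 = x) :
    Etp a b c x y = b := by rw [Etp, if_neg h1, if_pos h2]

lemma Etp_far {x y : ℕ} (a b c : ℝ) (h1 : ¬ x = y) (h2 : ¬(x + 1 = y ∨ y + 1 = x)) :
    Etp a b c x y = c := by rw [Etp, if_neg h1, if_neg h2]

lemma nine (a b c : ℝ) (i j : ℕ) :
    (Etp a b c (2*i) (2*j) + 2 * Etp a b c (2*i+1) (2*j) + Etp a b c (2*i+2) (2*j))
      + 2 * (Etp a b c (2*i) (2*j+1) + 2 * Etp a b c (2*i+1) (2*j+1) + Etp a b c (2*i+2) (2*j+1))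
      + (Etp a b c (2*i) (2*j+2) + 2 * Etp a b c (2*i+1) (2*j+2) + Etp a b c (2*i+2) (2*j+2))
    = Etp (6*a+8*b+2*c) (a+4*b+11*c) (16*c) i j := by
  by_cases h0 : i = j
  · subst h0
    rw [Etp_eq _ _ _ (by omega), Etp_adj (x := 2*i+1) (y := 2*i) _ _ _ (by omega) (by omega),
      Etp_far (x := 2*i+2) (y := 2*i) _ _ _ (by omega) (by omega),
      Etp_adj (x := 2*i) (y := 2*i+1) _ _ _ (by omega) (by omega),
      Etp_eq (x := 2*i+1) (y := 2*i+1) _ _ _ (by omega),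
      Etp_adj (x := 2*i+2) (y := 2*i+1) _ _ _ (by omega) (by omega),
      Etp_far (x := 2*i) (y := 2*i+2) _ _ _ (by omega) (by omega),
      Etp_adj (x := 2*i+1) (y := 2*i+2) _ _ _ (by omega) (by omega),
      Etp_eq (x := 2*i+2) (y := 2*i+2) _ _ _ (by omega),
      Etp_eq (x := i) (y := i) _ _ _ (by omega)]
    ring
  · by_cases h1 : i + 1 = j
    · rw [Etp_far (x := 2*i) (y := 2*j) _ _ _ (by omega) (by omega),
        Etp_adj (x := 2*i+1) (y := 2*j) _ _ _ (by omega) (by omega),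
        Etp_eq (x := 2*i+2) (y := 2*j) _ _ _ (by omega),
        Etp_far (x := 2*i) (y := 2*j+1) _ _ _ (by omega) (by omega),
        Etp_far (x := 2*i+1) (y := 2*j+1) _ _ _ (by omega) (by omega),
        Etp_adj (x := 2*i+2) (y := 2*j+1) _ _ _ (by omega) (by omega),
        Etp_far (x := 2*i) (y := 2*j+2) _ _ _ (by omega) (by omega),
        Etp_far (x := 2*i+1) (y := 2*j+2) _ _ _ (by omega) (by omega),
        Etp_far (x := 2*i+2) (y := 2*j+2) _ _ _ (by omega) (by omega),
        Etp_adj (x := i) (y := j) _ _ _ (by omega) (by omega)]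
      ring
    · by_cases h2 : j + 1 = i
      · rw [Etp_far (x := 2*i) (y := 2*j) _ _ _ (by omega) (by omega),
          Etp_far (x := 2*i+1) (y := 2*j) _ _ _ (by omega) (by omega),
          Etp_far (x := 2*i+2) (y := 2*j) _ _ _ (by omega) (by omega),
          Etp_adj (x := 2*i) (y := 2*j+1) _ _ _ (by omega) (by omega),
          Etp_far (x := 2*i+1) (y := 2*j+1) _ _ _ (by omega) (by omega),
          Etp_far (x := 2*i+2) (y := 2*j+1) _ _ _ (by omega) (by omega),
          Etp_eq (x := 2*i) (y := 2*j+2) _ _ _ (by omega),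
          Etp_adj (x := 2*i+1) (y := 2*j+2) _ _ _ (by omega) (by omega),
          Etp_far (x := 2*i+2) (y := 2*j+2) _ _ _ (by omega) (by omega),
          Etp_adj (x := i) (y := j) _ _ _ (by omega) (by omega)]
        ring
      · rw [Etp_far (x := 2*i) (y := 2*j) _ _ _ (by omega) (by omega),
          Etp_far (x := 2*i+1) (y := 2*j) _ _ _ (by omega) (by omega),
          Etp_far (x := 2*i+2) (y := 2*j) _ _ _ (by omega) (by omega),
          Etp_far (x := 2*i) (y := 2*j+1) _ _ _ (by omega) (by omega),
          Etp_far (x := 2*i+1) (y := 2*j+1) _ _ _ (by omega) (by omega),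
          Etp_far (x := 2*i+2) (y := 2*j+1) _ _ _ (by omega) (by omega),
          Etp_far (x := 2*i) (y := 2*j+2) _ _ _ (by omega) (by omega),
          Etp_far (x := 2*i+1) (y := 2*j+2) _ _ _ (by omega) (by omega),
          Etp_far (x := 2*i+2) (y := 2*j+2) _ _ _ (by omega) (by omega),
          Etp_far (x := i) (y := j) _ _ _ (by omega) (by omega)]
        ring

lemma Wgen_split (m n : ℕ) (i : Fin m) (h : 2 * (i:ℕ) + 2 < n) (p : Fin n) :
    Wgen m n i p =
      (if p = (⟨2*(i:ℕ), by omega⟩ : Fin n) then (1:ℝ) else 0)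
      + (if p = (⟨2*(i:ℕ)+1, by omega⟩ : Fin n) then 2 else 0)
      + (if p = (⟨2*(i:ℕ)+2, h⟩ : Fin n) then 1 else 0) := by
  simp only [Wgen, Matrix.of_apply, Fin.ext_iff]
  split_ifs <;> first | ring1 | (exfalso; omega)

lemma mulW_left (m n : ℕ) (M : Matrix (Fin n) (Fin n) ℝ) (i : Fin m) (r : Fin n)
    (h : 2 * (i:ℕ) + 2 < n) :
    (Wgen m n * M) i r =
      M ⟨2*(i:ℕ), by omega⟩ r + 2 * M ⟨2*(i:ℕ)+1, by omega⟩ r + M ⟨2*(i:ℕ)+2, h⟩ r := by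
  rw [Matrix.mul_apply]
  rw [Finset.sum_congr rfl fun p _ => by rw [Wgen_split m n i h p]]
  simp [add_mul, Finset.sum_add_distrib, ite_mul, Finset.sum_ite_eq']

lemma mulW_right {α : Type*} (m n : ℕ) (M : Matrix α (Fin n) ℝ) (x : α) (j : Fin m)
    (h : 2 * (j:ℕ) + 2 < n) :
    (M * (Wgen m n)ᵀ) x j =
      M x ⟨2*(j:ℕ), by omega⟩ + 2 * M x ⟨2*(j:ℕ)+1, by omega⟩ + M x ⟨2*(j:ℕ)+2, h⟩ := by
  rw [Matrix.mul_apply]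
  rw [Finset.sum_congr rfl fun p _ => by
    rw [Matrix.transpose_apply, Wgen_split m n j h p]]
  simp [mul_add, Finset.sum_add_distrib, mul_ite, Finset.sum_ite_eq']
  ring

lemma key (m n : ℕ) (hn : n = 2*m+1) (a b c : ℝ) (B : Matrix (Fin n) (Fin n) ℝ)
    (hB : ∀ p r : Fin n, B p r = Etp a b c p r) (i j : Fin m) :
    (Wgen m n * B * (Wgen m n)ᵀ) i j = Etp (6*a+8*b+2*c) (a+4*b+11*c) (16*c) i j := by
  have hi : 2 * (i:ℕ) + 2 < n := by have := i.isLt; omega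
  have hj : 2 * (j:ℕ) + 2 < n := by have := j.isLt; omega
  rw [mulW_right m n (Wgen m n * B) i j hj,
    mulW_left m n B i _ hi, mulW_left m n B i _ hi, mulW_left m n B i _ hi]
  simp only [hB]
  exact nine a b c i j

lemma mainlem (q : ℕ) : ∀ j, j < q → ∀ i i' : Fin (2^(q-j)-1), Bseq q j i i' =
    Etp ((2:ℝ)^(3*(j:ℤ)+1)/3 * 2^q - 2^(4*(j:ℤ)))
        ((2:ℝ)^(3*(j:ℤ)-1)/3 * 2^q - 2^(4*(j:ℤ)))
        (-(2:ℝ)^(4*(j:ℤ))) i i' := by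
  intro j
  induction j with
  | zero =>
    intro _ i i'
    show constB (2^q) i i' = _
    simp only [constB, Etp, Matrix.of_apply, Nat.cast_zero]
    norm_num
    split_ifs <;> push_cast <;> ring
  | succ j ih =>
    intro hj i i'
    have hq1 : j + 1 ≤ q := le_of_lt hj
    have hpow : (2:ℕ)^(q-j) = 2 * 2^(q-(j+1)) := by
      rw [← pow_succ']; congr 1; omega
    have hone : 1 ≤ (2:ℕ)^(q-(j+1)) := Nat.one_le_two_pow
    have hn : (2:ℕ)^(q-j) - 1 = 2 * (2^(q-(j+1)) - 1) + 1 := by omega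
    show (Wgen (2^(q-(j+1))-1) (2^(q-j)-1) * Bseq q j *
        (Wgen (2^(q-(j+1))-1) (2^(q-j)-1))ᵀ) i i' = _
    rw [key _ _ hn _ _ _ _ (fun p r => ih (by omega) p r) i i']
    simp only [Nat.cast_add, Nat.cast_one]
    have p1 : (2:ℝ)^(3*(j:ℤ)+1) = 4 * 2^(3*(j:ℤ)-1) := by
      rw [show 3*(j:ℤ)+1 = (3*(j:ℤ)-1) + 2 by ring,
        zpow_add₀ (by norm_num : (2:ℝ) ≠ 0)]
      norm_num [mul_comm]
    have p2 : (2:ℝ)^(3*((j:ℤ)+1)+1) = 32 * 2^(3*(j:ℤ)-1) := by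
      rw [show 3*((j:ℤ)+1)+1 = (3*(j:ℤ)-1) + 5 by ring,
        zpow_add₀ (by norm_num : (2:ℝ) ≠ 0)]
      norm_num [mul_comm]
    have p3 : (2:ℝ)^(3*((j:ℤ)+1)-1) = 8 * 2^(3*(j:ℤ)-1) := by
      rw [show 3*((j:ℤ)+1)-1 = (3*(j:ℤ)-1) + 3 by ring,
        zpow_add₀ (by norm_num : (2:ℝ) ≠ 0)]
      norm_num [mul_comm]
    have p4 : (2:ℝ)^(4*((j:ℤ)+1)) = 16 * 2^(4*(j:ℤ)) := by
      rw [show 4*((j:ℤ)+1) = (4*(j:ℤ)) + 4 by ring,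
        zpow_add₀ (by norm_num : (2:ℝ) ≠ 0)]
      norm_num [mul_comm]
    congr 1
    · rw [p1, p2, p4]; ring
    · rw [p1, p3, p4]; ring
    · rw [p4]; ring

/-- **Explicit Toeplitz form of the Galerkin coarse-grid matrices.**
For `N = 2^q` and `1 ≤ k ≤ q`, the level-`k` matrix `B^{(k)} = Bseq q (k−1)` has entries
`(2^{3k−2}/3)N − 2^{4k−4}` on the diagonal, `(2^{3k−4}/3)N − 2^{4k−4}` on the first
sub/super-diagonals, and `−2^{4k−4}` elsewhere. -/
theorem stmt15 (q : ℕ) (hq : 1 ≤ q) (k : ℕ) (hk1 : 1 ≤ k) (hk2 : k ≤ q) :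
    ∀ i j : Fin (2 ^ (q - (k - 1)) - 1),
      Bseq q (k - 1) i j =
        if (i : ℕ) = (j : ℕ) then
          (2 : ℝ) ^ (3 * (k : ℤ) - 2) / 3 * (2 : ℝ) ^ q - (2 : ℝ) ^ (4 * (k : ℤ) - 4)
        else if (i : ℕ) + 1 = (j : ℕ) ∨ (j : ℕ) + 1 = (i : ℕ) then
          (2 : ℝ) ^ (3 * (k : ℤ) - 4) / 3 * (2 : ℝ) ^ q - (2 : ℝ) ^ (4 * (k : ℤ) - 4)
        else -(2 : ℝ) ^ (4 * (k : ℤ) - 4) := by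
  intro i j
  rw [mainlem q (k-1) (by omega) i j]
  have hc : ((k-1 : ℕ) : ℤ) = (k:ℤ) - 1 := by omega
  show Etp _ _ _ _ _ = Etp ((2:ℝ)^(3*(k:ℤ)-2)/3 * 2^q - 2^(4*(k:ℤ)-4))
      ((2:ℝ)^(3*(k:ℤ)-4)/3 * 2^q - 2^(4*(k:ℤ)-4)) (-(2:ℝ)^(4*(k:ℤ)-4)) i j
  rw [hc, show 3*((k:ℤ)-1)+1 = 3*(k:ℤ)-2 by ring, show 3*((k:ℤ)-1)-1 = 3*(k:ℤ)-4 by ring,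
    show 4*((k:ℤ)-1) = 4*(k:ℤ)-4 by ring]
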